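/- Let f : L^n → L be a polynomial function over a bounded distributive lattice and f' its restriction to {0,1}^n. Then for each j, the j-th variable is essential in f if and only if it is essential in f'. In particular, f and f' have the same essential arity. -/
import Mathlib


inductive IsLatPoly {L : Type*} [DistribLattice L] [BoundedOrder L] {n : ℕ} :
    ((Fin n → L) → L) → Prop
  | proj (i : Fin n) : IsLatPoly (fun x => x i)
  | const (c : L) : IsLatPoly (fun _ => c)
  | inf {f g : (Fin n → L) → L} : IsLatPoly f → IsLatPoly g → IsLatPoly (fun x => f x ⊓ g x)
  | sup {f g : (Fin n → L) → L} : IsLatPoly f → IsLatPoly g → IsLatPoly (fun x => f x ⊔ g x)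

def EssentialAt {A B : Type*} {n : ℕ} (f : (Fin n → A) → B) (j : Fin n) : Prop :=
  ∃ (a : Fin n → A) (b : A), f (Function.update a j b) ≠ f a

noncomputable def essArity {A B : Type*} {n : ℕ} (f : (Fin n → A) → B) : ℕ :=
  Set.ncard {j | EssentialAt f j}

def boolEmb {L : Type*} [DistribLattice L] [BoundedOrder L] : Bool → L :=
  fun b => if b then ⊤ else ⊥

section Aux

variable {L : Type*} [DistribLattice L] [BoundedOrder L] {n : ℕ}

/-- characteristic tuple of a subset -/
def chi (S : Finset (Fin n)) : Fin n → L := fun i => if i ∈ S then (⊤ : L) else ⊥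

lemma chi_mono {S T : Finset (Fin n)} (h : S ⊆ T) : (chi S : Fin n → L) ≤ chi T := by
  intro i
  by_cases hi : i ∈ S
  · simp [chi, hi, h hi]
  · simp [chi, hi]

lemma le_nf {α : Type*} [SemilatticeSup α] [OrderBot α] {β : Type*} [Fintype β]
    (g : β → α) (S : β) : g S ≤ (Finset.univ : Finset β).sup g :=
  Finset.le_sup (Finset.mem_univ S)

lemma IsLatPoly.mono {f : (Fin n → L) → L} (hf : IsLatPoly f) : Monotone f := by
  induction hf with
  | proj i => exact fun x y h => h i
  | const c => exact monotone_const
  | inf hf hg ihf ihg => exact fun x y h => inf_le_inf (ihf h) (ihg h)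
  | sup hf hg ihf ihg => exact fun x y h => sup_le_sup (ihf h) (ihg h)

lemma normalForm {f : (Fin n → L) → L} (hf : IsLatPoly f) (x : Fin n → L) :
    f x = (Finset.univ : Finset (Finset (Fin n))).sup (fun S => f (chi S) ⊓ S.inf x) := by
  induction hf with
  | proj i =>
    beta_reduce
    apply le_antisymm
    · have h1 : x i ≤ (fun S : Finset (Fin n) => chi (L := L) S i ⊓ S.inf x) {i} := by
        simp [chi]
      exact h1.trans (le_nf (fun S : Finset (Fin n) => chi (L := L) S i ⊓ S.inf x) {i})
    · apply Finset.sup_le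
      intro S _
      by_cases h : i ∈ S
      · simpa [chi, h] using Finset.inf_le h
      · simp [chi, h]
  | const c =>
    beta_reduce
    apply le_antisymm
    · have h1 : c ≤ (fun S : Finset (Fin n) => c ⊓ S.inf x) ∅ := by simp
      exact h1.trans (le_nf (fun S : Finset (Fin n) => c ⊓ S.inf x) ∅)
    · exact Finset.sup_le fun S _ => inf_le_left
  | @inf f g hf hg ihf ihg =>
    beta_reduce
    apply le_antisymm
    · rw [ihf, ihg, Finset.sup_inf_distrib_right]
      apply Finset.sup_le
      intro S _
      rw [Finset.sup_inf_distrib_left]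
      apply Finset.sup_le
      intro T _
      have h1 : f (chi S) ⊓ S.inf x ⊓ (g (chi T) ⊓ T.inf x) ≤
          (f (chi (S ∪ T)) ⊓ g (chi (S ∪ T))) ⊓ (S ∪ T).inf x := by
        rw [Finset.inf_union]
        have hfS : f (chi S) ≤ f (chi (S ∪ T)) := hf.mono (chi_mono Finset.subset_union_left)
        have hgT : g (chi T) ≤ g (chi (S ∪ T)) := hg.mono (chi_mono Finset.subset_union_right)
        refine le_inf (le_inf ?_ ?_) (le_inf ?_ ?_)
        · exact inf_le_left.trans (inf_le_left.trans hfS)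
        · exact inf_le_right.trans (inf_le_left.trans hgT)
        · exact inf_le_left.trans inf_le_right
        · exact inf_le_right.trans inf_le_right
      exact h1.trans (le_nf (fun U : Finset (Fin n) => (f (chi U) ⊓ g (chi U)) ⊓ U.inf x) (S ∪ T))
    · apply Finset.sup_le
      intro S _
      have h1 : f (chi S) ⊓ S.inf x ≤ f x := by
        rw [ihf]; exact le_nf (fun S => f (chi S) ⊓ S.inf x) S
      have h2 : g (chi S) ⊓ S.inf x ≤ g x := by
        rw [ihg]; exact le_nf (fun S => g (chi S) ⊓ S.inf x) S
      refine le_inf ?_ ?_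
      · exact (inf_le_inf_right _ inf_le_left).trans h1
      · exact (inf_le_inf_right _ inf_le_right).trans h2
  | @sup f g hf hg ihf ihg =>
    beta_reduce
    apply le_antisymm
    · rw [ihf, ihg]
      apply sup_le
      · apply Finset.sup_le
        intro S _
        exact (inf_le_inf_right _ le_sup_left).trans
          (le_nf (fun S => (f (chi S) ⊔ g (chi S)) ⊓ S.inf x) S)
      · apply Finset.sup_le
        intro S _
        exact (inf_le_inf_right _ le_sup_right).trans
          (le_nf (fun S => (f (chi S) ⊔ g (chi S)) ⊓ S.inf x) S)
    · apply Finset.sup_le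
      intro S _
      have h1 : f (chi S) ⊓ S.inf x ≤ f x := by
        rw [ihf]; exact le_nf (fun S => f (chi S) ⊓ S.inf x) S
      have h2 : g (chi S) ⊓ S.inf x ≤ g x := by
        rw [ihg]; exact le_nf (fun S => g (chi S) ⊓ S.inf x) S
      rw [inf_sup_right]
      exact sup_le (h1.trans le_sup_left) (h2.trans le_sup_right)

end Aux

theorem essential_iff_essential_restriction {L : Type*} [DistribLattice L] [BoundedOrder L]
    {n : ℕ} {f : (Fin n → L) → L} (hf : IsLatPoly f) :
    (∀ j : Fin n,
        EssentialAt f j ↔ EssentialAt (fun x : Fin n → Bool => f (fun i => boolEmb (x i))) j) ∧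
      essArity f = essArity (fun x : Fin n → Bool => f (fun i => boolEmb (x i))) := by
  have main : ∀ j : Fin n,
      EssentialAt f j ↔ EssentialAt (fun x : Fin n → Bool => f (fun i => boolEmb (x i))) j := by
    intro j
    constructor
    · -- contrapositive: not essential in restriction → not essential in f
      rw [← not_imp_not]
      intro hnot
      simp only [EssentialAt, not_exists, not_not] at hnot ⊢
      -- key: f (chi (S.erase j)) = f (chi S)
      have key : ∀ S : Finset (Fin n), f (chi (S.erase j)) = f (chi S) := by
        intro S
        have h := hnot (fun i => decide (i ∈ S)) false
        have e1 : (fun i => boolEmb (L := L) (Function.update (fun i => decide (i ∈ S)) j false i))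
            = chi (S.erase j) := by
          funext i
          by_cases hij : i = j
          · subst hij; simp [chi, boolEmb]
          · simp [chi, boolEmb, Function.update_of_ne hij, hij]
        have e2 : (fun i => boolEmb (L := L) (decide (i ∈ S))) = chi S := by
          funext i
          by_cases hi : i ∈ S <;> simp [chi, boolEmb, hi]
        rw [e1, e2] at h
        exact h
      have oneside : ∀ (a : Fin n → L) (b : L), f (Function.update a j b) ≤ f a := by
        intro a b
        rw [normalForm hf (Function.update a j b)]
        apply Finset.sup_le
        intro S _
        by_cases hj : j ∈ S
        · calc f (chi S) ⊓ S.inf (Function.update a j b)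
              = f (chi (S.erase j)) ⊓ S.inf (Function.update a j b) := by rw [key S]
            _ ≤ f (chi (S.erase j)) ⊓ (S.erase j).inf (Function.update a j b) :=
                inf_le_inf_left _ (Finset.inf_mono (f := Function.update a j b)
                  (Finset.erase_subset _ _))
            _ = f (chi (S.erase j)) ⊓ (S.erase j).inf a := by
                congr 1
                apply Finset.inf_congr rfl
                intro i hi
                exact Function.update_of_ne (Finset.ne_of_mem_erase hi) _ _
            _ ≤ f a := by
                rw [normalForm hf a]
                exact le_nf (fun S => f (chi S) ⊓ S.inf a) (S.erase j)
        · have : S.inf (Function.update a j b) = S.inf a := by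
            apply Finset.inf_congr rfl
            intro i hi
            exact Function.update_of_ne (ne_of_mem_of_not_mem hi hj) _ _
          rw [this, normalForm hf a]
          exact le_nf (fun S => f (chi S) ⊓ S.inf a) S
      intro a b
      apply le_antisymm (oneside a b)
      have : a = Function.update (Function.update a j b) j (a j) := by
        rw [Function.update_idem, Function.update_eq_self]
      calc f a = f (Function.update (Function.update a j b) j (a j)) := by rw [← this]
        _ ≤ f (Function.update a j b) := oneside _ _
    · rintro ⟨x, b, hxb⟩
      refine ⟨fun i => boolEmb (x i), boolEmb b, ?_⟩
      have e : Function.update (fun i => boolEmb (L := L) (x i)) j (boolEmb b)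
          = fun i => boolEmb (Function.update x j b i) := by
        funext i
        by_cases hij : i = j
        · subst hij; simp
        · simp [Function.update_of_ne hij]
      rw [e]
      exact hxb
  refine ⟨main, ?_⟩
  unfold essArity
  congr 1
  ext j
  exact main j
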